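/- arXiv:2407.14373 — 2 statements merged into one kernel-verified Lean document; each statement's English description precedes it below -/
import Mathlib

section
/- Suppose x_a, ξ_a, ξ_b, Φ are differentiable functions of time satisfying ẋ_a = A₀(t)x_a + B₀(t)u(t) + D₀(t)θ + v(t), ξ̇_a = A₀(t)ξ_a + B₀(t)u(t) + v(t), ξ̇_b = A₀(t)ξ_b + D₀(t), and Φ̇ = A₀(t)Φ with Φ(0) = I, where θ is a constant vector. Then the error e(t) := ξ_a(t) + ξ_b(t)θ − x_a(t) satisfies ė = A₀(t)e, and consequently x_a(t) = ξ_a(t) + ξ_b(t)θ − Φ(t)e(0) for all t. -/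
open Matrix Set

/-!
The error `e = ξ_a + ξ_b θ - x_a` solves `ė = A₀ e` because the inputs `B₀ u`, `v` and
`D₀ θ` cancel in its derivative. The function `t ↦ Φ(t) e(0)` solves the same linear equation
with the same value at `0`, and solutions of `ẏ = A(t) y` with continuous `A` are unique, since
`A` is bounded, hence the field uniformly Lipschitz, on every compact time interval.
-/

theorem ContinuousLinearMap.linear_ODE_solution_unique {E : Type*} [NormedAddCommGroup E]
    [NormedSpace ℝ E] {A : ℝ → E →L[ℝ] E} (hA : Continuous A) {f g : ℝ → E}
    (hf : ∀ t, HasDerivAt f (A t (f t)) t) (hg : ∀ t, HasDerivAt g (A t (g t)) t)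
    {t₀ : ℝ} (h₀ : f t₀ = g t₀) : f = g := by
  funext t
  obtain ⟨a, b, ht, ht₀⟩ : ∃ a b, t ∈ Ioo a b ∧ t₀ ∈ Ioo a b :=
    ⟨min t t₀ - 1, max t t₀ + 1, by grind, by grind⟩
  obtain ⟨C, hC⟩ := isCompact_Icc.exists_bound_of_continuousOn (s := Icc a b) hA.continuousOn
  have hLip : ∀ s ∈ Ioo a b, LipschitzOnWith C.toNNReal (A s) univ := fun s hs =>
    (ContinuousLinearMap.lipschitzWith_of_opNorm_le
      ((hC s (Ioo_subset_Icc_self hs)).trans (Real.le_coe_toNNReal C))).lipschitzOnWith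
  exact ODE_solution_unique_of_mem_Ioo hLip ht₀ (fun s _ => ⟨hf s, mem_univ _⟩)
    (fun s _ => ⟨hg s, mem_univ _⟩) h₀ ht

theorem Matrix.linear_ODE_solution_unique {m : Type*} [Fintype m]
    {A : ℝ → Matrix m m ℝ} (hA : Continuous A) {f g : ℝ → m → ℝ}
    (hf : ∀ t, HasDerivAt f (A t *ᵥ f t) t) (hg : ∀ t, HasDerivAt g (A t *ᵥ g t) t)
    {t₀ : ℝ} (h₀ : f t₀ = g t₀) : f = g :=
  let toCLM : Matrix m m ℝ →ₗ[ℝ] (m → ℝ) →L[ℝ] (m → ℝ) :=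
    LinearMap.toContinuousLinearMap.toLinearMap ∘ₗ Matrix.mulVecBilin ℝ ℝ
  ContinuousLinearMap.linear_ODE_solution_unique
    (toCLM.continuous_of_finiteDimensional.comp hA) hf hg h₀

theorem hasDerivAt_mulVec_const {𝕜 : Type*} [NontriviallyNormedField 𝕜] {m n : Type*}
    [Fintype m] [Fintype n] {M : 𝕜 → Matrix m n 𝕜} {M' : Matrix m n 𝕜} {t : 𝕜}
    (hM : ∀ i j, HasDerivAt (fun s => M s i j) (M' i j) t) (x : n → 𝕜) :
    HasDerivAt (fun s => M s *ᵥ x) (M' *ᵥ x) t :=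
  hasDerivAt_pi.2 fun i => HasDerivAt.fun_sum fun j _ => (hM i j).mul_const (x j)

/-- GPEBO construction. The error `e := ξ_a + ξ_b θ − x_a` obeys the
homogeneous equation `ė = A₀(t) e`, hence `x_a(t) = ξ_a(t) + ξ_b(t) θ − Φ(t) e(0)`. -/
theorem gpebo_error_dynamics
    (n q : ℕ)
    (A₀ : ℝ → Matrix (Fin n) (Fin n) ℝ) (hA₀ : Continuous A₀)
    (B₀ : ℝ → Matrix (Fin n) (Fin n) ℝ) (D₀ : ℝ → Matrix (Fin n) (Fin q) ℝ)
    (u : ℝ → Fin n → ℝ) (v : ℝ → Fin n → ℝ) (θ : Fin q → ℝ)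
    (xa ξa : ℝ → Fin n → ℝ)
    (ξb : ℝ → Matrix (Fin n) (Fin q) ℝ) (Φ : ℝ → Matrix (Fin n) (Fin n) ℝ)
    (hxa : ∀ t : ℝ, HasDerivAt xa
      ((A₀ t).mulVec (xa t) + (B₀ t).mulVec (u t) + (D₀ t).mulVec θ + v t) t)
    (hξa : ∀ t : ℝ, HasDerivAt ξa
      ((A₀ t).mulVec (ξa t) + (B₀ t).mulVec (u t) + v t) t)
    (hξb : ∀ (t : ℝ) (i : Fin n) (j : Fin q),
      HasDerivAt (fun s => ξb s i j) ((A₀ t * ξb t + D₀ t) i j) t)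
    (hΦ : ∀ (t : ℝ) (i j : Fin n),
      HasDerivAt (fun s => Φ s i j) ((A₀ t * Φ t) i j) t)
    (hΦ0 : Φ 0 = 1) :
    (∀ t : ℝ, HasDerivAt (fun s => ξa s + (ξb s).mulVec θ - xa s)
      ((A₀ t).mulVec (ξa t + (ξb t).mulVec θ - xa t)) t) ∧
    (∀ t : ℝ, xa t = ξa t + (ξb t).mulVec θ
      - (Φ t).mulVec (ξa 0 + (ξb 0).mulVec θ - xa 0)) := by
  set e : ℝ → Fin n → ℝ := fun s => ξa s + ξb s *ᵥ θ - xa s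
  have he : ∀ t, HasDerivAt e (A₀ t *ᵥ e t) t := fun t =>
    (((hξa t).add (hasDerivAt_mulVec_const (hξb t) θ)).sub (hxa t)).congr_deriv (by
      simp only [e, add_mulVec, mulVec_add, mulVec_sub, mulVec_mulVec]
      abel)
  have hΦe : ∀ t, HasDerivAt (fun s => Φ s *ᵥ e 0) (A₀ t *ᵥ (Φ t *ᵥ e 0)) t := fun t =>
    (hasDerivAt_mulVec_const (hΦ t) (e 0)).congr_deriv (mulVec_mulVec _ _ _).symm
  have he_eq : e = fun s => Φ s *ᵥ e 0 :=
    Matrix.linear_ODE_solution_unique hA₀ he hΦe (t₀ := 0) (by simp [hΦ0])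
  refine ⟨he, fun t => ?_⟩
  rw [← congrFun he_eq t, sub_sub_cancel]
end

section
/- For the time-invariant case: let a₁, C_{w,1}, C_{w,2} be nonzero constants with a₁·C_{w,1}/C_{w,2} < 0, and choose L_w = a₁ C_{w,1} (C_{w,1}/C_{w,2}, 1)ᵀ. Then the constant matrix M_w with entries M₁₁ = L_{w,1}C_{w,1}, M₁₂ = L_{w,1}C_{w,2} − a₁, M₂₁ = L_{w,2}C_{w,1}, M₂₂ = L_{w,2}C_{w,2} + C_{w,1}a₁/C_{w,2} is Hurwitz (all eigenvalues have negative real part). -/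
/-! A real 2 × 2 matrix with negative trace and positive determinant is Hurwitz: its eigenvalues
are the roots of `λ² - tr λ + det`, which are either real (and then negative, as the polynomial is
positive on `[0, ∞)`) or a conjugate pair with real part `tr / 2`. With `κ = a₁ c₁ / c₂ < 0` one
computes `tr M_w = κ (1 + c₁² + c₂²)` and `det M_w = κ² (c₁² + c₂²)`. -/

open Matrix

open Polynomial in
theorem Matrix.sq_sub_trace_mul_add_det_eq_zero_of_mem_spectrum {K : Type*} [Field K]
    {A : Matrix (Fin 2) (Fin 2) K} {μ : K} (hμ : μ ∈ spectrum K A) :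
    μ ^ 2 - A.trace * μ + A.det = 0 := by
  simpa [charpoly_fin_two] using (mem_spectrum_iff_isRoot_charpoly.mp hμ).eq_zero

theorem Complex.re_neg_of_sq_sub_mul_add_eq_zero {t d : ℝ} (ht : t < 0) (hd : 0 < d) {μ : ℂ}
    (hμ : μ ^ 2 - t * μ + d = 0) : μ.re < 0 := by
  have hre : μ.re ^ 2 - μ.im ^ 2 - t * μ.re + d = 0 := by
    simpa [sq] using congrArg Complex.re hμ
  have him : μ.im * (2 * μ.re - t) = 0 := by
    linear_combination (by simpa [sq] using congrArg Complex.im hμ : _ = _)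
  rcases mul_eq_zero.mp him with hreal | hcentre
  · nlinarith
  · linarith

theorem Matrix.re_neg_of_mem_spectrum_map_ofReal {A : Matrix (Fin 2) (Fin 2) ℝ}
    (htr : A.trace < 0) (hdet : 0 < A.det) :
    ∀ μ ∈ spectrum ℂ (A.map Complex.ofReal), μ.re < 0 := by
  intro μ hμ
  refine Complex.re_neg_of_sq_sub_mul_add_eq_zero htr hdet ?_
  have hroot := sq_sub_trace_mul_add_det_eq_zero_of_mem_spectrum hμ
  simpa [trace_fin_two, det_fin_two] using hroot

theorem LTI_Mw_Hurwitz_general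
    (a₁ c₁ c₂ : ℝ)
    (hsign : a₁ * c₁ / c₂ < 0)
    (l₁ l₂ : ℝ) (hl₁ : l₁ = a₁ * c₁ * (c₁ / c₂)) (hl₂ : l₂ = a₁ * c₁)
    (Mw : Matrix (Fin 2) (Fin 2) ℝ)
    (hMw : Mw = !![l₁ * c₁, l₁ * c₂ - a₁;
                   l₂ * c₁, l₂ * c₂ + c₁ * a₁ / c₂]) :
    ∀ μ ∈ spectrum ℂ (Mw.map (Complex.ofReal)), μ.re < 0 := by
  set κ := a₁ * c₁ / c₂
  -- `x / 0 = 0`, so `hsign` excludes `c₂ = 0`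
  have hc₂ : c₂ ≠ 0 := by
    rintro rfl
    simp [κ] at hsign
  have htr : Mw.trace = κ * (1 + c₁ ^ 2 + c₂ ^ 2) := by
    simp only [hMw, hl₁, hl₂, trace_fin_two_of, κ]
    field_simp
    ring
  have hdet : Mw.det = κ ^ 2 * (c₁ ^ 2 + c₂ ^ 2) := by
    simp only [hMw, hl₁, hl₂, det_fin_two_of, κ]
    field_simp
    ring
  apply Matrix.re_neg_of_mem_spectrum_map_ofReal
  · rw [htr]
    exact mul_neg_of_neg_of_pos hsign (by positivity)
  · rw [hdet]
    exact mul_pos (pow_two_pos_of_ne_zero hsign.ne) (by positivity)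

/-- LTI case. With `L_w = a₁ C_{w,1} (C_{w,1}/C_{w,2}, 1)ᵀ` and
`a₁ C_{w,1}/C_{w,2} < 0`, the constant observer error matrix `M_w` is Hurwitz. -/
theorem LTI_Mw_Hurwitz
    (a₁ c₁ c₂ : ℝ) (hc₁ : c₁ ≠ 0) (hc₂ : c₂ ≠ 0)
    (hsign : a₁ * c₁ / c₂ < 0)
    (l₁ l₂ : ℝ) (hl₁ : l₁ = a₁ * c₁ * (c₁ / c₂)) (hl₂ : l₂ = a₁ * c₁)
    (Mw : Matrix (Fin 2) (Fin 2) ℝ)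
    (hMw : Mw = !![l₁ * c₁, l₁ * c₂ - a₁;
                   l₂ * c₁, l₂ * c₂ + c₁ * a₁ / c₂]) :
    ∀ μ ∈ spectrum ℂ (Mw.map (Complex.ofReal)), μ.re < 0 :=
  LTI_Mw_Hurwitz_general a₁ c₁ c₂ hsign l₁ l₂ hl₁ hl₂ Mw hMw
end
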